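/- arXiv:2008.13435 — 5 statements merged into one kernel-verified Lean document; each statement's English description precedes it below -/
import Mathlib

section
/- Let q be an odd prime power and n ≥ 0 an integer. Then the number of involutions in GL_n(𝔽_q), i.e. |{x ∈ GL_n(𝔽_q) : x² = 1}|, equals Σ_{r=0}^n q^{r(n−r)} [n r]_q. -/
/-!
Since `q` is odd, `2` is invertible in `𝔽_q`, and `x ↦ (x + 1) / 2` maps the involutions of
`GLₙ(𝔽_q)` bijectively onto the idempotent endomorphisms of `𝔽_qⁿ`. An idempotent is determined by
its range `U` and a projection onto `U`; fixing a complement `W` of `U`, the projections onto `U`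
are parametrised by `Hom(W, U)`, so there are `q ^ (r (n - r))` of them when `dim U = r`. The number
of `r`-dimensional subspaces is the Gaussian binomial coefficient: the linearly independent
`r`-tuples of `𝔽_qⁿ` are fibred over the subspace they span, each fibre consisting of the linearly
independent `r`-tuples of an `r`-dimensional space.
-/

open Module Submodule Finset

attribute [local instance] Fintype.ofFinite

theorem two_ne_zero_of_odd_card {K : Type*} [Field K] [Fintype K] (h : Odd (Fintype.card K)) :
    (2 : K) ≠ 0 :=
  Ring.two_ne_zero fun hc => by
    have := FiniteField.even_card_iff_char_two.mp hc
    rw [Nat.odd_iff] at h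
    omega

def unitsSqEqOneEquiv {M : Type*} [Monoid M] : {x : Mˣ // x ^ 2 = 1} ≃ {a : M // a ^ 2 = 1} where
  toFun x := ⟨x.1, by rw [← Units.val_pow_eq_pow_val, x.2, Units.val_one]⟩
  invFun a := ⟨Units.ofPowEqOne a 2 a.2 two_ne_zero, Units.pow_ofPowEqOne _ _⟩
  left_inv _ := Subtype.ext (Units.ext rfl)
  right_inv _ := rfl

def sqEqOneEquivIsIdempotentElem {K A : Type*} [Field K] [Ring A] [Algebra K A]
    (h2 : (2 : K) ≠ 0) : {a : A // a ^ 2 = 1} ≃ {p : A // IsIdempotentElem p} where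
  toFun a := ⟨(2 : K)⁻¹ • (a + 1), by
    have h : (a.1 + 1) * (a.1 + 1) = (2 : K) • (a.1 + 1) := by
      rw [add_mul, mul_add, one_mul, ← pow_two, a.2, mul_one, two_smul]
      abel
    rw [IsIdempotentElem, smul_mul_smul_comm, h, smul_smul, mul_assoc, inv_mul_cancel₀ h2, mul_one]⟩
  invFun p := ⟨(2 : K) • p.1 - 1, by
    rw [pow_two, sub_mul, mul_sub, smul_mul_smul_comm, p.2.eq, mul_one, one_mul, mul_smul,
      two_smul K ((2 : K) • p.1)]
    abel⟩
  left_inv a := Subtype.ext <| by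
    simp only [smul_smul, mul_inv_cancel₀ h2, one_smul, add_sub_cancel_right]
  right_inv p := Subtype.ext <| by
    simp only [sub_add_cancel, smul_smul, inv_mul_cancel₀ h2, one_smul]

def isIdempotentElemEquivOfMulEquiv {M N : Type*} [Mul M] [Mul N] (e : M ≃* N) :
    {a : M // IsIdempotentElem a} ≃ {b : N // IsIdempotentElem b} :=
  e.toEquiv.subtypeEquiv fun a => ⟨fun h => h.map e, fun h => by simpa using h.map e.symm⟩

theorem card_involutions_GL {K ι : Type*} [Field K] [Fintype ι] [DecidableEq ι]
    (h2 : (2 : K) ≠ 0) :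
    Nat.card {x : GL ι K // x ^ 2 = 1} =
      Nat.card {f : Module.End K (ι → K) // IsIdempotentElem f} :=
  Nat.card_congr <| unitsSqEqOneEquiv.trans <| (sqEqOneEquivIsIdempotentElem h2).trans <|
    isIdempotentElemEquivOfMulEquiv Matrix.toLinAlgEquiv'.toMulEquiv

theorem prod_range_pow_sub_pow {R : Type*} [CommRing R] (x : R) {m r : ℕ} (hr : r ≤ m) :
    ∏ i ∈ range r, (x ^ m - x ^ i) =
      (∏ i ∈ range r, x ^ i) * ∏ i ∈ Icc 1 r, (x ^ (m - r + i) - 1) := by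
  have factor (i : ℕ) (hi : i ∈ range r) : x ^ m - x ^ i = x ^ i * (x ^ (m - i) - 1) := by
    rw [mul_sub, mul_one, ← pow_add, Nat.add_sub_cancel' (by grind)]
  rw [prod_congr rfl factor, prod_mul_distrib]
  congr 1
  refine prod_nbij' (r - ·) (r - ·) ?_ ?_ ?_ ?_ ?_ <;> intro i hi <;>
    simp only [mem_range, mem_Icc] at hi ⊢ <;> grind

theorem prod_range_pow_sub_pow_div {K : Type*} [Field K] {x : K} (hx : x ≠ 0) {m r : ℕ}
    (hr : r ≤ m) :
    (∏ i ∈ range r, (x ^ m - x ^ i)) / ∏ i ∈ range r, (x ^ r - x ^ i) =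
      ∏ i ∈ Icc 1 r, (x ^ (m - r + i) - 1) / (x ^ i - 1) := by
  rw [prod_range_pow_sub_pow x hr, prod_range_pow_sub_pow x le_rfl, Nat.sub_self,
    mul_div_mul_left _ _ (prod_ne_zero_iff.mpr fun i _ => pow_ne_zero i hx), prod_div_distrib]
  simp only [zero_add]

section Subspaces

variable {K V : Type*} [Field K] [AddCommGroup V] [Module K V]

noncomputable def projectionsEquivOfIsCompl {U W : Submodule K V} (h : IsCompl U W) :
    {f : V →ₗ[K] U // ∀ x : U, f x = x} ≃ (W →ₗ[K] U) where
  toFun f := f.1 ∘ₗ W.subtype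
  invFun g := ⟨LinearMap.ofIsCompl h LinearMap.id g, fun x => LinearMap.ofIsCompl_apply_left h x⟩
  left_inv f := Subtype.ext <| LinearMap.ofIsCompl_eq h (fun u => (f.2 u).symm) fun _ => rfl
  right_inv _ := LinearMap.ext fun w => LinearMap.ofIsCompl_apply_right h w

variable [Finite V]

theorem sum_submodule_eq_sum_finrank {M : Type*} [AddCommMonoid M] (f : ℕ → M) :
    ∑ U : Submodule K V, f (finrank K U) =
      ∑ r ∈ range (finrank K V + 1), Nat.card {U : Submodule K V // finrank K U = r} • f r := by
  rw [← sum_fiberwise_of_maps_to (t := range (finrank K V + 1))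
    (g := fun U : Submodule K V => finrank K U) fun U _ => mem_range_succ_iff.mpr U.finrank_le]
  refine sum_congr rfl fun r _ => ?_
  rw [sum_congr rfl fun U hU => by rw [(mem_filter.mp hU).2], sum_const, Nat.card_eq_fintype_card,
    Fintype.card_subtype]

variable [Fintype K]

local notation "q" => Fintype.card K

theorem card_projections (U : Submodule K V) :
    Nat.card {f : V →ₗ[K] U // ∀ x : U, f x = x} =
      q ^ (finrank K U * (finrank K V - finrank K U)) := by
  obtain ⟨W, hW⟩ := U.exists_isCompl
  have : Module.Finite K V := Module.Finite.of_finite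
  have : Finite (W →ₗ[K] U) := Module.finite_of_finite K
  rw [Nat.card_congr (projectionsEquivOfIsCompl hW), Nat.card_eq_fintype_card,
    card_eq_pow_finrank (K := K), finrank_linearMap, ← finrank_add_eq_of_isCompl hW,
    Nat.add_sub_cancel_left, mul_comm]

theorem card_isIdempotentElem_end :
    Nat.card {f : Module.End K V // IsIdempotentElem f} =
      ∑ U : Submodule K V, q ^ (finrank K U * (finrank K V - finrank K U)) := by
  have : Module.Finite K V := Module.Finite.of_finite
  have : Finite (Module.End K V) := Module.finite_of_finite K
  rw [← Nat.card_congr (Equiv.sigmaFiberEquiv fun f : {f : Module.End K V // IsIdempotentElem f} =>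
    LinearMap.range f.1), Nat.card_sigma]
  refine sum_congr rfl fun U _ => ?_
  rw [Nat.card_congr ((Equiv.subtypeSubtypeEquivSubtypeInter _ (LinearMap.range · = U)).trans
    U.isIdempotentElemEquiv), card_projections]

theorem cast_card_linearIndependent {k : ℕ} (hk : k ≤ finrank K V) :
    (Nat.card {s : Fin k → V // LinearIndependent K s} : ℚ) =
      ∏ i ∈ range k, ((q : ℚ) ^ finrank K V - (q : ℚ) ^ i) := by
  rw [card_linearIndependent hk, Nat.cast_prod,
    Fin.prod_univ_eq_prod_range (fun i => ((q ^ finrank K V - q ^ i : ℕ) : ℚ))]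
  refine prod_congr rfl fun i hi => ?_
  rw [Nat.cast_sub (Nat.pow_le_pow_right Fintype.card_pos (by grind)), Nat.cast_pow, Nat.cast_pow]

def spanOfLinearIndependent {k : ℕ} (s : {s : Fin k → V // LinearIndependent K s}) :
    {U : Submodule K V // finrank K U = k} :=
  ⟨span K (Set.range s.1), by rw [finrank_span_eq_card s.2, Fintype.card_fin]⟩

def linearIndependentSpanEquiv {k : ℕ} (U : {U : Submodule K V // finrank K U = k}) :
    {s : {s : Fin k → V // LinearIndependent K s} // spanOfLinearIndependent s = U} ≃
      {t : Fin k → U.1 // LinearIndependent K t} where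
  toFun s := ⟨fun i => ⟨s.1.1 i, congrArg Subtype.val s.2 ▸ subset_span (Set.mem_range_self i)⟩,
    .of_comp U.1.subtype s.1.2⟩
  invFun t := ⟨⟨U.1.subtype ∘ t.1, t.2.map' _ U.1.ker_subtype⟩, Subtype.ext <| show
      span K (Set.range (U.1.subtype ∘ t.1)) = U.1 by
    have : Module.Finite K V := Module.Finite.of_finite
    rw [Set.range_comp, ← map_span, t.2.span_eq_top_of_card_eq_finrank' (by simp [U.2]),
      map_subtype_top]⟩
  left_inv _ := rfl
  right_inv _ := rfl

theorem card_submodule_finrank_eq {k : ℕ} (hk : k ≤ finrank K V) :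
    (Nat.card {U : Submodule K V // finrank K U = k} : ℚ) =
      ∏ i ∈ Icc 1 k, ((q : ℚ) ^ (finrank K V - k + i) - 1) / ((q : ℚ) ^ i - 1) := by
  have hq : 1 < (q : ℚ) := by exact_mod_cast Fintype.one_lt_card
  have hcount : (Nat.card {U : Submodule K V // finrank K U = k} : ℚ) *
      ∏ i ∈ range k, ((q : ℚ) ^ k - (q : ℚ) ^ i) =
        ∏ i ∈ range k, ((q : ℚ) ^ finrank K V - (q : ℚ) ^ i) := by
    rw [← cast_card_linearIndependent hk,
      ← Nat.card_congr (Equiv.sigmaFiberEquiv spanOfLinearIndependent), Nat.card_sigma,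
      Nat.cast_sum]
    simp only [Nat.card_congr (linearIndependentSpanEquiv _)]
    rw [sum_congr rfl fun U _ => by rw [cast_card_linearIndependent U.2.ge, U.2], sum_const,
      card_univ, nsmul_eq_mul, Nat.card_eq_fintype_card]
  have hden : ∏ i ∈ range k, ((q : ℚ) ^ k - (q : ℚ) ^ i) ≠ 0 :=
    prod_ne_zero_iff.mpr fun i hi => sub_ne_zero.mpr (pow_lt_pow_right₀ hq (mem_range.mp hi)).ne'
  rw [eq_div_of_mul_eq hden hcount, prod_range_pow_sub_pow_div (by positivity) hk]

end Subspaces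

/-- For a finite field `F` with `q` elements, `q` odd, the number of involutions in
`GLₙ(F)` equals `Σ_{r=0}^n q^{r(n-r)} [n r]_q`, where the Gaussian binomial coefficient
is `[n r]_q = ∏_{i=1}^r (q^{n-r+i} - 1)/(q^i - 1)`. -/
theorem stmt5 (F : Type) [Field F] [Fintype F] (hodd : Odd (Fintype.card F)) (n : ℕ) :
    (Nat.card {x : GL (Fin n) F // x ^ 2 = 1} : ℚ)
      = ∑ r ∈ Finset.range (n + 1),
          (Fintype.card F : ℚ) ^ (r * (n - r)) *
            ∏ i ∈ Finset.Icc 1 r,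
              ((Fintype.card F : ℚ) ^ (n - r + i) - 1) / ((Fintype.card F : ℚ) ^ i - 1) := by
  have hdim : finrank F (Fin n → F) = n := by simp
  rw [card_involutions_GL (two_ne_zero_of_odd_card hodd), card_isIdempotentElem_end, hdim]
  push_cast
  rw [sum_submodule_eq_sum_finrank fun r => (Fintype.card F : ℚ) ^ (r * (n - r)), hdim]
  refine sum_congr rfl fun r hr => ?_
  rw [nsmul_eq_mul, card_submodule_finrank_eq (by rw [hdim]; exact mem_range_succ_iff.mp hr),
    hdim, mul_comm]
end

section
/- Let q and T be complex numbers with |q| < 1 and |T| < 1. Then Σ_{n≥0} (Î_n(q)/(q;q)_n) T^n = ∏_{m≥0} (1 − q^m T²)/(1 − q^m T)², where Î_n(q) := Σ_{r=0}^n q^{r(n−r)} [n r]_q; both the series and the infinite product converge absolutely. -/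
/-!
Since `[n r]_q / (q; q)_n = 1 / ((q; q)_r (q; q)_{n-r})`, the series is the regrouping along
antidiagonals of the absolutely convergent double series
`∑_{r,s} q^{rs} T^{r+s} / ((q; q)_r (q; q)_s)`. Summing over `s` first with Euler's identity
`∑_s x^s / (q; q)_s = 1 / (x; q)_∞` at `x = q^r T`, and using `(T; q)_∞ = (T; q)_r (q^r T; q)_∞`,
leaves `(T; q)_∞⁻¹ ∑_r (T; q)_r / (q; q)_r T^r`, which the q-binomial theorem
`∑_n (a; q)_n / (q; q)_n yⁿ = (a y; q)_∞ / (y; q)_∞` evaluates at `a = y = T`.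
The q-binomial theorem follows from the functional equation `(1 - y) F(y) = (1 - a y) F(q y)` of
its left-hand side `F`: iterating it gives `F(y) (y; q)_N = (a y; q)_N F(qᴺ y)`, and
`F(qᴺ y) → F(0) = 1`.
-/

open Finset Filter Topology

section Algebra

variable {R : Type*} [CommRing R]

/-- `(a; q)_n`; in particular `(q; q)_n = qPochhammer q q n`. -/
def qPochhammer (q a : R) (n : ℕ) : R := ∏ k ∈ range n, (1 - q ^ k * a)

theorem qPochhammer_succ (q a : R) (n : ℕ) :
    qPochhammer q a (n + 1) = qPochhammer q a n * (1 - q ^ n * a) :=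
  prod_range_succ _ n

theorem qPochhammer_add (q a : R) (m n : ℕ) :
    qPochhammer q a (m + n) = qPochhammer q a m * qPochhammer q (q ^ m * a) n := by
  simp only [qPochhammer, prod_range_add, pow_add, mul_comm (q ^ m), mul_assoc]

theorem prod_Icc_one_eq_prod_range {M : Type*} [CommMonoid M] (f : ℕ → M) (n : ℕ) :
    ∏ k ∈ Icc 1 n, f k = ∏ k ∈ range n, f (k + 1) := by
  rw [← Ico_add_one_right_eq_Icc, prod_Ico_eq_prod_range, Nat.add_sub_cancel]
  simp only [add_comm 1]

theorem prod_Icc_one_sub_pow (q : R) (n : ℕ) :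
    ∏ k ∈ Icc 1 n, (1 - q ^ k) = qPochhammer q q n := by
  simp only [prod_Icc_one_eq_prod_range, qPochhammer, pow_succ]

end Algebra

section Field

variable {K : Type*} [Field K] {q : K}

def gaussBinomial (q : K) (n r : ℕ) : K := ∏ i ∈ Icc 1 r, (q ^ (n - r + i) - 1) / (q ^ i - 1)

def Ihat (q : K) (n : ℕ) : K := ∑ r ∈ range (n + 1), q ^ (r * (n - r)) * gaussBinomial q n r

theorem gaussBinomial_eq {n r : ℕ} (hrn : r ≤ n) (hq : qPochhammer q q (n - r) ≠ 0) :
    gaussBinomial q n r =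
      qPochhammer q q n / (qPochhammer q q r * qPochhammer q q (n - r)) := by
  have hnum : ∏ i ∈ Icc 1 r, (1 - q ^ (n - r + i)) =
      qPochhammer q q n / qPochhammer q q (n - r) := by
    rw [eq_div_iff hq, mul_comm, ← Nat.sub_add_cancel hrn, qPochhammer_add, Nat.add_sub_cancel,
      prod_Icc_one_eq_prod_range]
    simp only [qPochhammer, ← add_assoc, pow_succ, pow_add, mul_comm, mul_left_comm]
  have hsign : ∀ i, (q ^ (n - r + i) - 1) / (q ^ i - 1) = (1 - q ^ (n - r + i)) / (1 - q ^ i) :=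
    fun i => by rw [← neg_sub, ← neg_sub 1 (q ^ i), neg_div_neg_eq]
  rw [gaussBinomial, prod_congr rfl fun i _ => hsign i, prod_div_distrib, hnum,
    prod_Icc_one_sub_pow, div_div, mul_comm (qPochhammer q q (n - r))]

theorem Ihat_div_qPochhammer_mul_pow (hq : ∀ k, qPochhammer q q k ≠ 0) (T : K) (n : ℕ) :
    Ihat q n / qPochhammer q q n * T ^ n =
      ∑ p ∈ antidiagonal n,
        T ^ p.1 / qPochhammer q q p.1 * ((q ^ p.1 * T) ^ p.2 / qPochhammer q q p.2) := by
  rw [Ihat, sum_div, sum_mul, Nat.sum_antidiagonal_eq_sum_range_succ_mk]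
  refine sum_congr rfl fun r hr => ?_
  obtain ⟨s, rfl⟩ := Nat.exists_eq_add_of_le (Nat.lt_succ_iff.1 (mem_range.1 hr))
  rw [gaussBinomial_eq (Nat.le_add_right r s) (hq _), Nat.add_sub_cancel_left]
  field_simp [hq]
  ring

def qBinomialCoeff (q a : K) (n : ℕ) : K := qPochhammer q a n / qPochhammer q q n

theorem qBinomialCoeff_zero (q a : K) : qBinomialCoeff q a 0 = 1 := by
  simp [qBinomialCoeff, qPochhammer]

theorem qBinomialCoeff_zero_eq_inv (q : K) (n : ℕ) :
    qBinomialCoeff q 0 n = (qPochhammer q q n)⁻¹ := by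
  simp [qBinomialCoeff, qPochhammer]

theorem qBinomialCoeff_succ_mul (a : K) {n : ℕ} (hq : qPochhammer q q (n + 1) ≠ 0) :
    qBinomialCoeff q a (n + 1) * (1 - q ^ (n + 1)) = qBinomialCoeff q a n * (1 - q ^ n * a) := by
  rw [qPochhammer_succ, mul_ne_zero_iff] at hq
  rw [qBinomialCoeff, qBinomialCoeff, qPochhammer_succ, qPochhammer_succ, ← pow_succ]
  rw [← pow_succ] at hq
  field_simp [hq.1, hq.2]

end Field

theorem HasSum.sum_antidiagonal {A α : Type*} [AddCommMonoid A] [HasAntidiagonal A]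
    [AddCommMonoid α] [TopologicalSpace α] [ContinuousAdd α] [RegularSpace α]
    {f : A × A → α} {a : α} (h : HasSum f a) : HasSum (fun n => ∑ p ∈ antidiagonal n, f p) a :=
  (HasAntidiagonal.sigmaAntidiagonalEquivProd.hasSum_iff.2 h).sigma fun n =>
    (antidiagonal n).hasSum f

section Analysis

variable {𝕜 : Type*} [NormedField 𝕜] {q y T : 𝕜}

noncomputable def qPochhammerInf (q a : 𝕜) : 𝕜 := ∏' k, (1 - q ^ k * a)

theorem norm_pow_mul_le (hq : ‖q‖ ≤ 1) (a : 𝕜) (k : ℕ) : ‖q ^ k * a‖ ≤ ‖a‖ := by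
  rw [norm_mul, norm_pow]
  exact mul_le_of_le_one_left (norm_nonneg a) (pow_le_one₀ (norm_nonneg q) hq)

theorem one_sub_pow_mul_ne_zero (hq : ‖q‖ ≤ 1) {a : 𝕜} (ha : ‖a‖ < 1) (k : ℕ) :
    1 - q ^ k * a ≠ 0 :=
  sub_ne_zero.2 fun h => (norm_pow_mul_le hq a k).not_gt (by rwa [← h, norm_one])

theorem qPochhammer_ne_zero (hq : ‖q‖ ≤ 1) {a : 𝕜} (ha : ‖a‖ < 1) (n : ℕ) :
    qPochhammer q a n ≠ 0 :=
  prod_ne_zero_iff.2 fun k _ => one_sub_pow_mul_ne_zero hq ha k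

theorem summable_norm_pow_mul (hq : ‖q‖ < 1) (a : 𝕜) : Summable fun k => ‖q ^ k * a‖ := by
  simpa only [norm_mul, norm_pow] using
    (summable_geometric_of_lt_one (norm_nonneg q) hq).mul_right ‖a‖

variable [CompleteSpace 𝕜]

theorem multipliable_one_sub_pow_mul (hq : ‖q‖ < 1) (a : 𝕜) :
    Multipliable fun k => 1 - q ^ k * a := by
  simpa only [sub_eq_add_neg] using
    multipliable_one_add_of_summable (by simpa only [norm_neg] using summable_norm_pow_mul hq a)

theorem tendsto_qPochhammer (hq : ‖q‖ < 1) (a : 𝕜) :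
    Tendsto (qPochhammer q a) atTop (𝓝 (qPochhammerInf q a)) :=
  (multipliable_one_sub_pow_mul hq a).hasProd.tendsto_prod_nat

theorem qPochhammerInf_ne_zero (hq : ‖q‖ < 1) {a : 𝕜} (ha : ‖a‖ < 1) :
    qPochhammerInf q a ≠ 0 := by
  simpa only [qPochhammerInf, sub_eq_add_neg] using
    tprod_one_add_ne_zero_of_summable (f := fun k => -(q ^ k * a))
      (fun k => sub_eq_add_neg (1 : 𝕜) _ ▸ one_sub_pow_mul_ne_zero hq.le ha k)
      (by simpa only [norm_neg] using summable_norm_pow_mul hq a)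

theorem qPochhammerInf_eq_mul (hq : ‖q‖ < 1) (a : 𝕜) (n : ℕ) :
    qPochhammerInf q a = qPochhammer q a n * qPochhammerInf q (q ^ n * a) := by
  have h : Multipliable fun k => 1 - q ^ (k + n) * a := by
    simpa only [← mul_assoc, ← pow_add] using multipliable_one_sub_pow_mul hq (q ^ n * a)
  have e := Multipliable.prod_mul_tprod_nat_mul' (f := fun k => 1 - q ^ k * a) h
  simp only [pow_add, mul_assoc] at e
  exact e.symm

theorem exists_norm_qBinomialCoeff_le (hq : ‖q‖ < 1) (a : 𝕜) :
    ∃ M, ∀ n, ‖qBinomialCoeff q a n‖ ≤ M := by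
  have h := (tendsto_qPochhammer hq a).div (tendsto_qPochhammer hq q) (qPochhammerInf_ne_zero hq hq)
  obtain ⟨M, hM⟩ := isBounded_iff_forall_norm_le.1 (Metric.isBounded_range_of_tendsto _ h)
  exact ⟨M, fun n => hM _ ⟨n, rfl⟩⟩

theorem summable_norm_qBinomialCoeff_mul_pow (hq : ‖q‖ < 1) (a : 𝕜) (hy : ‖y‖ < 1) :
    Summable fun n => ‖qBinomialCoeff q a n * y ^ n‖ := by
  obtain ⟨M, hM⟩ := exists_norm_qBinomialCoeff_le hq a
  refine .of_nonneg_of_le (fun _ => norm_nonneg _) (fun n => ?_)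
    ((summable_geometric_of_lt_one (norm_nonneg y) hy).mul_left M)
  rw [norm_mul, norm_pow]
  exact mul_le_mul_of_nonneg_right (hM n) (by positivity)

noncomputable def qBinomialSeries (q a y : 𝕜) : 𝕜 := ∑' n, qBinomialCoeff q a n * y ^ n

theorem qBinomialSeries_functional_eq (hq : ‖q‖ < 1) (a : 𝕜) (hy : ‖y‖ < 1) :
    (1 - y) * qBinomialSeries q a y = (1 - a * y) * qBinomialSeries q a (q * y) := by
  have hqy : ‖q * y‖ < 1 := by
    rw [norm_mul]; exact mul_lt_one_of_nonneg_of_lt_one_left (norm_nonneg q) hq hy.le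
  have hF := (summable_norm_qBinomialCoeff_mul_pow hq a hy).of_norm.hasSum
  have hG := (summable_norm_qBinomialCoeff_mul_pow hq a hqy).of_norm.hasSum
  have hu : HasSum (fun n => qBinomialCoeff q a n * (1 - q ^ n) * y ^ n)
      (qBinomialSeries q a y - qBinomialSeries q a (q * y)) := by
    refine (hF.sub hG).congr_fun fun n => ?_
    ring
  have hv : HasSum (fun n => qBinomialCoeff q a n * (1 - q ^ n * a) * y ^ (n + 1))
      (y * qBinomialSeries q a y - a * y * qBinomialSeries q a (q * y)) := by
    refine ((hF.mul_left y).sub (hG.mul_left (a * y))).congr_fun fun n => ?_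
    ring
  -- shifted by one index, `hu` becomes `hv` through the recurrence of the coefficients
  have hshift := (hasSum_nat_add_iff' 1).2 hu
  simp only [range_one, sum_singleton, pow_zero, sub_self, mul_zero, zero_mul, sub_zero] at hshift
  have hv' := hv.congr_fun fun n => by
    rw [← qBinomialCoeff_succ_mul a (qPochhammer_ne_zero hq.le hq (n + 1))]
  linear_combination hshift.unique hv'

theorem qBinomialSeries_mul_qPochhammer (hq : ‖q‖ < 1) (a : 𝕜) (hy : ‖y‖ < 1) (N : ℕ) :
    qBinomialSeries q a y * qPochhammer q y N =
      qPochhammer q (a * y) N * qBinomialSeries q a (q ^ N * y) := by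
  induction N with
  | zero => simp [qPochhammer]
  | succ N ih =>
    have hfe := qBinomialSeries_functional_eq hq a ((norm_pow_mul_le hq.le y N).trans_lt hy)
    rw [← mul_assoc q, ← pow_succ'] at hfe
    rw [qPochhammer_succ, qPochhammer_succ, ← mul_assoc, ih]
    linear_combination qPochhammer q (a * y) N * hfe

theorem tendsto_qBinomialSeries_pow_mul (hq : ‖q‖ < 1) (a : 𝕜) (hy : ‖y‖ < 1) :
    Tendsto (fun N => qBinomialSeries q a (q ^ N * y)) atTop (𝓝 1) := by
  obtain ⟨M, hM⟩ := exists_norm_qBinomialCoeff_le hq a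
  have hlim : Tendsto (fun N => q ^ N * y) atTop (𝓝 0) := by
    simpa using (tendsto_pow_atTop_nhds_zero_of_norm_lt_one hq).mul_const y
  have h := tendsto_tsum_of_dominated_convergence
    (f := fun N n => qBinomialCoeff q a n * (q ^ N * y) ^ n)
    ((summable_geometric_of_lt_one (norm_nonneg y) hy).mul_left M)
    (fun n => (hlim.pow n).const_mul _)
    (.of_forall fun N n => by
      rw [norm_mul, norm_pow]
      exact mul_le_mul (hM n) (pow_le_pow_left₀ (norm_nonneg _) (norm_pow_mul_le hq.le y N) n)
        (by positivity) ((norm_nonneg _).trans (hM n)))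
  have h0 : ∑' n, qBinomialCoeff q a n * 0 ^ n = 1 := by
    rw [tsum_eq_single 0 fun n hn => by simp [hn], pow_zero, mul_one, qBinomialCoeff_zero]
  rwa [h0] at h

theorem qBinomialSeries_eq (hq : ‖q‖ < 1) (a : 𝕜) (hy : ‖y‖ < 1) :
    qBinomialSeries q a y = qPochhammerInf q (a * y) / qPochhammerInf q y := by
  rw [eq_div_iff (qPochhammerInf_ne_zero hq hy)]
  have hL := (tendsto_qPochhammer hq y).const_mul (qBinomialSeries q a y)
  have hR := (tendsto_qPochhammer hq (a * y)).mul (tendsto_qBinomialSeries_pow_mul hq a hy)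
  rw [mul_one] at hR
  exact tendsto_nhds_unique (hL.congr fun N => qBinomialSeries_mul_qPochhammer hq a hy N) hR

theorem tsum_pow_div_qPochhammer (hq : ‖q‖ < 1) (hy : ‖y‖ < 1) :
    ∑' n, y ^ n / qPochhammer q q n = (qPochhammerInf q y)⁻¹ := by
  have h := qBinomialSeries_eq hq 0 hy
  simp only [qBinomialSeries, qBinomialCoeff_zero_eq_inv, zero_mul] at h
  simpa [div_eq_inv_mul, qPochhammerInf] using h

theorem summable_norm_pow_div_qPochhammer_mul (hq : ‖q‖ < 1) (hT : ‖T‖ < 1) :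
    Summable fun p : ℕ × ℕ =>
      ‖T ^ p.1 / qPochhammer q q p.1 * ((q ^ p.1 * T) ^ p.2 / qPochhammer q q p.2)‖ := by
  obtain ⟨M, hM⟩ := exists_norm_qBinomialCoeff_le hq 0
  simp only [qBinomialCoeff_zero_eq_inv] at hM
  have hM0 : 0 ≤ M := (norm_nonneg _).trans (hM 0)
  have hgeo := (summable_geometric_of_lt_one (norm_nonneg T) hT).mul_left M
  have hgeo0 (n : ℕ) : 0 ≤ M * ‖T‖ ^ n := by positivity
  have hterm (x : 𝕜) (n : ℕ) : ‖x ^ n / qPochhammer q q n‖ ≤ M * ‖x‖ ^ n := by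
    rw [div_eq_mul_inv, norm_mul, norm_pow, mul_comm]
    exact mul_le_mul_of_nonneg_right (hM n) (by positivity)
  refine .of_nonneg_of_le (fun _ => norm_nonneg _) (fun p => ?_)
    (hgeo.mul_of_nonneg hgeo hgeo0 hgeo0)
  rw [norm_mul]
  refine mul_le_mul (hterm T p.1) ((hterm _ p.2).trans ?_) (norm_nonneg _) (hgeo0 _)
  gcongr
  exact norm_pow_mul_le hq.le T p.1

theorem hasSum_Ihat_div_qPochhammer_mul_pow (hq : ‖q‖ < 1) (hT : ‖T‖ < 1) :
    HasSum (fun n => Ihat q n / qPochhammer q q n * T ^ n)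
      (qPochhammerInf q (T ^ 2) / qPochhammerInf q T ^ 2) := by
  have hg := (summable_norm_pow_div_qPochhammer_mul hq hT).of_norm
  have hinner (r : ℕ) : ∑' s, T ^ r / qPochhammer q q r * ((q ^ r * T) ^ s / qPochhammer q q s) =
      qBinomialCoeff q T r * T ^ r / qPochhammerInf q T := by
    rw [tsum_mul_left, tsum_pow_div_qPochhammer hq ((norm_pow_mul_le hq.le T r).trans_lt hT),
      qPochhammerInf_eq_mul hq T r, qBinomialCoeff]
    have := qPochhammer_ne_zero hq.le hT r
    have := qPochhammerInf_ne_zero hq ((norm_pow_mul_le hq.le T r).trans_lt hT)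
    field_simp
  have htotal : ∑' p : ℕ × ℕ, T ^ p.1 / qPochhammer q q p.1 *
      ((q ^ p.1 * T) ^ p.2 / qPochhammer q q p.2) =
        qPochhammerInf q (T ^ 2) / qPochhammerInf q T ^ 2 := by
    rw [hg.tsum_prod, tsum_congr hinner, tsum_div_const]
    change qBinomialSeries q T T / _ = _
    rw [qBinomialSeries_eq hq T hT, div_div, sq, sq]
  rw [← htotal]
  exact hg.hasSum.sum_antidiagonal.congr_fun
    (Ihat_div_qPochhammer_mul_pow (qPochhammer_ne_zero hq.le hq) T)

theorem summable_norm_Ihat_div_qPochhammer_mul_pow (hq : ‖q‖ < 1) (hT : ‖T‖ < 1) :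
    Summable fun n => ‖Ihat q n / qPochhammer q q n * T ^ n‖ := by
  refine .of_nonneg_of_le (fun _ => norm_nonneg _) (fun n => ?_)
    ((summable_norm_pow_div_qPochhammer_mul hq hT).hasSum.sum_antidiagonal.summable)
  rw [Ihat_div_qPochhammer_mul_pow (qPochhammer_ne_zero hq.le hq)]
  exact norm_sum_le _ _

end Analysis

theorem summable_norm_one_sub_div_one_sub_sq_sub_one {𝕜 : Type*} [NontriviallyNormedField 𝕜]
    {q : 𝕜} (hq : ‖q‖ < 1) (T : 𝕜) :
    Summable fun m : ℕ => ‖(1 - q ^ m * T ^ 2) / (1 - q ^ m * T) ^ 2 - 1‖ := by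
  let f : 𝕜 → 𝕜 := fun x => (1 - x * T ^ 2) / (1 - x * T) ^ 2 - 1
  have hf : DifferentiableAt 𝕜 f 0 := by fun_prop (disch := simp)
  have hO : f =O[𝓝 0] fun x => x := by simpa [f] using hf.isBigO_sub
  exact hO.comp_summable_norm (g := fun m : ℕ => q ^ m)
    (by simpa using summable_geometric_of_lt_one (norm_nonneg q) hq)

/-- For complex `q, T` with `|q| < 1`, `|T| < 1`:
`Σ_{n≥0} Î_n(q)/(q;q)_n Tⁿ = ∏_{m≥0} (1 - qᵐT²)/(1 - qᵐT)²`, where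
`Î_n(q) = Σ_{r=0}^n q^{r(n-r)} [n r]_q`; the series converges absolutely and the
infinite product converges absolutely (`Σ_m |factor_m - 1| < ∞`). -/
theorem stmt6 (q T : ℂ) (hq : ‖q‖ < 1) (hT : ‖T‖ < 1) :
    Summable (fun n : ℕ =>
      ‖(∑ r ∈ Finset.range (n + 1), q ^ (r * (n - r)) *
          ∏ i ∈ Finset.Icc 1 r, (q ^ (n - r + i) - 1) / (q ^ i - 1))
        / (∏ k ∈ Finset.Icc 1 n, (1 - q ^ k)) * T ^ n‖) ∧
    Summable (fun m : ℕ =>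
      ‖(1 - q ^ m * T ^ 2) / (1 - q ^ m * T) ^ 2 - 1‖) ∧
    ∑' n : ℕ,
        (∑ r ∈ Finset.range (n + 1), q ^ (r * (n - r)) *
            ∏ i ∈ Finset.Icc 1 r, (q ^ (n - r + i) - 1) / (q ^ i - 1))
          / (∏ k ∈ Finset.Icc 1 n, (1 - q ^ k)) * T ^ n
      = ∏' m : ℕ, (1 - q ^ m * T ^ 2) / (1 - q ^ m * T) ^ 2 := by
  have hprod : HasProd (fun m : ℕ => (1 - q ^ m * T ^ 2) / (1 - q ^ m * T) ^ 2)
      (qPochhammerInf q (T ^ 2) / qPochhammerInf q T ^ 2) :=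
    (multipliable_one_sub_pow_mul hq (T ^ 2)).hasProd.div₀
      ((multipliable_one_sub_pow_mul hq T).hasProd.pow 2)
      (pow_ne_zero 2 (qPochhammerInf_ne_zero hq hT))
  simp only [prod_Icc_one_sub_pow]
  exact ⟨summable_norm_Ihat_div_qPochhammer_mul_pow hq hT,
    summable_norm_one_sub_div_one_sub_sq_sub_one hq T,
    (hasSum_Ihat_div_qPochhammer_mul_pow hq hT).tsum_eq.trans hprod.tprod_eq.symm⟩
end

section
/- Assume that for every s ≥ 1 the set {x ∈ X ∖ X^σ : F^s(x) = σ(x)} is finite, of cardinality N'_s. Then for every integer r ≥ 1: (a) every x ∈ X ∖ X^σ whose least positive integer s with F^s(x) = σ(x) equals r has F-orbit of size exactly 2r, and its Γ-orbit coincides with its F-orbit; (b) the set of such x has cardinality Σ_{s | r, r/s odd} μ(r/s) N'_s; consequently the number of Γ-orbits formed by such points equals (1/2r) Σ_{s | r, r/s odd} μ(r/s) N'_s. -/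
/-- The `F`-orbit of a point `x` (for `F` a bijection with finite orbits, the forward
orbit coincides with the full orbit). -/
def FOrb {X : Type*} (F : Equiv.Perm X) (x : X) : Set X :=
  {y | ∃ m : ℕ, (F ^ m) x = y}

/-- The `Γ = ℤ × ℤ/2ℤ`-orbit of `x`, where `ℤ` acts through `F` and `ℤ/2ℤ` through the
involution `σ` commuting with `F`. -/
def GOrb {X : Type*} (F σ : Equiv.Perm X) (x : X) : Set X :=
  {y | ∃ m : ℕ, (F ^ m) x = y ∨ (F ^ m) (σ x) = y}

/-- `r` is the least positive integer with `F^r x = σ x`. -/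
def IsLeastHalf {X : Type*} (F σ : Equiv.Perm X) (r : ℕ) (x : X) : Prop :=
  1 ≤ r ∧ (F ^ r) x = σ x ∧ ∀ s : ℕ, 1 ≤ s → s < r → (F ^ s) x ≠ σ x

section Helpers
variable {X : Type*} (F σ : Equiv.Perm X)

lemma pow_pow_apply (m k : ℕ) (x : X) : (F ^ m) ((F ^ k) x) = (F ^ (m + k)) x := by
  rw [pow_add, Equiv.Perm.mul_apply]

variable {F σ}

lemma isPP_iff {m : ℕ} {x : X} : Function.IsPeriodicPt ⇑F m x ↔ (F ^ m) x = x := by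
  simp [Function.IsPeriodicPt, Function.IsFixedPt, ← Equiv.Perm.coe_pow]

lemma pow_mul_fix {n : ℕ} {x : X} (h : (F ^ n) x = x) (t : ℕ) : (F ^ (n * t)) x = x := by
  induction t with
  | zero => simp
  | succ k ih => rw [Nat.mul_succ, pow_add, Equiv.Perm.mul_apply, h, ih]

lemma fix_shift {a m : ℕ} {x : X} (h : (F ^ a) ((F ^ m) x) = (F ^ m) x) : (F ^ a) x = x := by
  apply (F ^ m).injective
  rw [pow_pow_apply, add_comm, ← pow_pow_apply, h]

lemma pow_comm_sigma (hcomm : ∀ x, F (σ x) = σ (F x)) (m : ℕ) (x : X) :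
    (F ^ m) (σ x) = σ ((F ^ m) x) := by
  induction m with
  | zero => simp
  | succ k ih =>
      rw [pow_succ', Equiv.Perm.mul_apply, ih, hcomm, Equiv.Perm.mul_apply]

lemma minimalPeriod_pos (horb : ∀ x : X, (FOrb F x).Finite) (x : X) :
    0 < Function.minimalPeriod ⇑F x := by
  obtain ⟨a, -, b, -, hab, heq⟩ := Set.infinite_univ.exists_ne_map_eq_of_mapsTo
    (f := fun m : ℕ => (F ^ m) x) (t := FOrb F x) (fun m _ => ⟨m, rfl⟩) (horb x)
  have key : ∀ a b : ℕ, a < b → (F ^ a) x = (F ^ b) x → (F ^ (b - a)) x = x := by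
    intro a b h hab
    apply (F ^ a).injective
    rw [pow_pow_apply, add_comm, Nat.sub_add_cancel h.le, ← hab]
  rcases hab.lt_or_gt with h | h
  · have := key a b h heq
    exact Function.IsPeriodicPt.minimalPeriod_pos (by omega) (isPP_iff.mpr this)
  · have := key b a h heq.symm
    exact Function.IsPeriodicPt.minimalPeriod_pos (by omega) (isPP_iff.mpr this)

lemma card_FOrb (horb : ∀ x : X, (FOrb F x).Finite) (x : X) :
    Nat.card (FOrb F x) = Function.minimalPeriod ⇑F x := by
  set n := Function.minimalPeriod ⇑F x with hn
  have hpos : 0 < n := minimalPeriod_pos horb x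
  have himg : FOrb F x = (fun m => (F ^ m) x) '' (Set.Iio n) := by
    ext y
    constructor
    · rintro ⟨m, rfl⟩
      refine ⟨m % n, Nat.mod_lt _ hpos, ?_⟩
      have h2 := Function.iterate_mod_minimalPeriod_eq (f := ⇑F) (x := x) (n := m)
      simp only [← Equiv.Perm.coe_pow] at h2
      exact h2
    · rintro ⟨m, -, rfl⟩; exact ⟨m, rfl⟩
  have hinj := Function.iterate_injOn_Iio_minimalPeriod (f := ⇑F) (x := x)
  simp only [← Equiv.Perm.coe_pow] at hinj
  rw [Nat.card_coe_set_eq, himg, Set.ncard_image_of_injOn hinj]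
  rw [← Finset.coe_range, Set.ncard_coe_finset, Finset.card_range]


lemma minimalPeriod_eq (horb : ∀ x : X, (FOrb F x).Finite)
    (hinv : ∀ x, σ (σ x) = x) (hcomm : ∀ x, F (σ x) = σ (F x))
    {r : ℕ} {x : X} (hne : σ x ≠ x) (h : IsLeastHalf F σ r x) :
    Function.minimalPeriod ⇑F x = 2 * r := by
  obtain ⟨hr1, hxr, hmin⟩ := h
  have h2r : (F ^ (2 * r)) x = x := by
    rw [two_mul, pow_add, Equiv.Perm.mul_apply, hxr, pow_comm_sigma hcomm, hxr, hinv]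
  have hpos : 0 < Function.minimalPeriod ⇑F x := minimalPeriod_pos horb x
  have hdvd : Function.minimalPeriod ⇑F x ∣ 2 * r := (isPP_iff.mpr h2r).minimalPeriod_dvd
  have hndr : ¬ Function.minimalPeriod ⇑F x ∣ r := by
    intro hd
    obtain ⟨c, hc⟩ := hd
    have : (F ^ r) x = x := by
      rw [hc]
      exact pow_mul_fix (isPP_iff.mp (Function.isPeriodicPt_minimalPeriod ⇑F x)) c
    exact hne (hxr.symm.trans this)
  rcases Nat.lt_or_ge r (Function.minimalPeriod ⇑F x) with hlt | hge
  · obtain ⟨k, hk⟩ := hdvd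
    match k, hk with
    | 0, hk => omega
    | 1, hk => omega
    | (p+2), hk =>
      exfalso
      have h2 : Function.minimalPeriod ⇑F x * 2 ≤ Function.minimalPeriod ⇑F x * (p + 2) :=
        Nat.mul_le_mul_left _ (by omega)
      omega
  · exfalso
    have hmod : (F ^ (r % Function.minimalPeriod ⇑F x)) x = σ x := by
      have h2 := Function.iterate_mod_minimalPeriod_eq (f := ⇑F) (x := x) (n := r)
      simp only [← Equiv.Perm.coe_pow] at h2
      exact h2.trans hxr
    have hne0 : r % Function.minimalPeriod ⇑F x ≠ 0 :=
      fun h0 => hndr (Nat.dvd_of_mod_eq_zero h0)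
    have hltn := Nat.mod_lt r hpos
    exact hmin _ (by omega) (by omega) hmod

lemma pow_eq_sigma_iff (horb : ∀ x : X, (FOrb F x).Finite)
    (hinv : ∀ x, σ (σ x) = x) (hcomm : ∀ x, F (σ x) = σ (F x))
    {r : ℕ} {x : X} (hne : σ x ≠ x) (h : IsLeastHalf F σ r x) (s : ℕ) :
    (F ^ s) x = σ x ↔ r ∣ s ∧ Odd (s / r) := by
  obtain ⟨hr1, hxr, hmin⟩ := h
  have hn := minimalPeriod_eq horb hinv hcomm hne ⟨hr1, hxr, hmin⟩
  have h2r : (F ^ (2 * r)) x = x := by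
    have := Function.isPeriodicPt_minimalPeriod ⇑F x
    rw [hn] at this; exact isPP_iff.mp this
  constructor
  · intro hs
    have hsr : r ≤ s := by
      by_contra hlt
      push_neg at hlt
      rcases Nat.eq_zero_or_pos s with rfl | hs1
      · simp at hs; exact hne hs.symm
      · exact hmin s hs1 hlt hs
    have hfix : (F ^ (s - r)) x = x := by
      apply (F ^ r).injective
      rw [pow_pow_apply, add_comm, Nat.sub_add_cancel hsr, hs, hxr]
    have hd : 2 * r ∣ s - r := by
      have := (isPP_iff.mpr hfix).minimalPeriod_dvd
      rwa [hn] at this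
    obtain ⟨t, ht⟩ := hd
    have hse : s = r * (2 * t + 1) := by
      have : r * (2 * t + 1) = r + 2 * r * t := by ring
      omega
    refine ⟨⟨2 * t + 1, hse⟩, ?_⟩
    rw [hse, Nat.mul_div_cancel_left _ (by omega)]
    exact ⟨t, by omega⟩
  · rintro ⟨⟨c, rfl⟩, hodd⟩
    rw [Nat.mul_div_cancel_left _ (by omega)] at hodd
    obtain ⟨t, rfl⟩ := hodd
    have : r * (2 * t + 1) = 2 * r * t + r := by ring
    rw [this, pow_add, Equiv.Perm.mul_apply, hxr, pow_comm_sigma hcomm, pow_mul_fix h2r]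

lemma mem_orbit_least (horb : ∀ x : X, (FOrb F x).Finite)
    (hinv : ∀ x, σ (σ x) = x) (hcomm : ∀ x, F (σ x) = σ (F x))
    {r : ℕ} {x : X} (hne : σ x ≠ x) (h : IsLeastHalf F σ r x) (m : ℕ) :
    σ ((F ^ m) x) ≠ (F ^ m) x ∧ IsLeastHalf F σ r ((F ^ m) x) := by
  obtain ⟨hr1, hxr, hmin⟩ := h
  have hn := minimalPeriod_eq horb hinv hcomm hne ⟨hr1, hxr, hmin⟩
  have hnd : ∀ a : ℕ, 1 ≤ a → a < 2 * r → (F ^ a) x ≠ x := by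
    intro a ha1 ha2 hfix
    have := (isPP_iff.mpr hfix).minimalPeriod_dvd
    rw [hn] at this
    exact absurd (Nat.le_of_dvd (by omega) this) (by omega)
  have hy : (F ^ r) ((F ^ m) x) = σ ((F ^ m) x) := by
    rw [pow_pow_apply, ← pow_comm_sigma hcomm, ← hxr, pow_pow_apply, add_comm r m]
  have hyne : σ ((F ^ m) x) ≠ (F ^ m) x := by
    intro heq
    rw [heq] at hy
    exact hnd r hr1 (by omega) (fix_shift hy)
  refine ⟨hyne, hr1, hy, ?_⟩
  intro s hs1 hsr heq
  rw [← hy] at heq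
  have : (F ^ (r - s)) ((F ^ m) x) = (F ^ m) x := by
    apply (F ^ s).injective
    rw [pow_pow_apply, add_comm, Nat.sub_add_cancel hsr.le, heq]
  exact hnd (r - s) (by omega) (by omega) (fix_shift this)

lemma FOrb_eq_of_mem (horb : ∀ x : X, (FOrb F x).Finite) {x y : X}
    (hy : y ∈ FOrb F x) : FOrb F y = FOrb F x := by
  obtain ⟨m, rfl⟩ := hy
  have hpos : 0 < Function.minimalPeriod ⇑F x := minimalPeriod_pos horb x
  set n := Function.minimalPeriod ⇑F x
  have hfix : (F ^ n) x = x := isPP_iff.mp (Function.isPeriodicPt_minimalPeriod ⇑F x)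
  ext z
  constructor
  · rintro ⟨k, rfl⟩
    exact ⟨k + m, by rw [← pow_pow_apply]⟩
  · rintro ⟨k, rfl⟩
    refine ⟨k + m * (n - 1), ?_⟩
    rw [pow_pow_apply]
    have hn1 : n - 1 + 1 = n := Nat.succ_pred_eq_of_pos hpos
    have key : m * (n - 1) + m = n * m := by
      calc m * (n - 1) + m = ((n - 1) + 1) * m := by ring
        _ = n * m := by rw [hn1]
    have heq : k + m * (n - 1) + m = k + n * m := by omega
    rw [heq, pow_add, Equiv.Perm.mul_apply, pow_mul_fix hfix]

lemma GOrb_eq_FOrb' {r : ℕ} {x : X} (hxr : (F ^ r) x = σ x) :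
    GOrb F σ x = FOrb F x := by
  ext y
  constructor
  · rintro ⟨m, h | h⟩
    · exact ⟨m, h⟩
    · exact ⟨m + r, by rw [← pow_pow_apply, hxr, h]⟩
  · rintro ⟨m, h⟩
    exact ⟨m, Or.inl h⟩

lemma exists_least {x : X} {s : ℕ} (hs1 : 1 ≤ s) (hx : (F ^ s) x = σ x) :
    ∃ t, IsLeastHalf F σ t x := by
  classical
  have hex : ∃ k, 1 ≤ k ∧ (F ^ k) x = σ x := ⟨s, hs1, hx⟩
  exact ⟨Nat.find hex, (Nat.find_spec hex).1, (Nat.find_spec hex).2,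
    fun k hk1 hklt hke => Nat.find_min hex hklt ⟨hk1, hke⟩⟩

lemma least_unique {x : X} {t t' : ℕ} (h : IsLeastHalf F σ t x)
    (h' : IsLeastHalf F σ t' x) : t = t' := by
  by_contra hne
  rcases Nat.lt_or_ge t t' with hlt | hge
  · exact h'.2.2 t h.1 hlt h.2.1
  · exact h.2.2 t' h'.1 (by omega) h'.2.1


lemma A_finite (hfin : ∀ s : ℕ, 1 ≤ s → {x : X | σ x ≠ x ∧ (F ^ s) x = σ x}.Finite) (t : ℕ) :
    {x : X | σ x ≠ x ∧ IsLeastHalf F σ t x}.Finite := by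
  rcases Nat.eq_zero_or_pos t with rfl | ht
  · convert Set.finite_empty
    ext x
    simp [IsLeastHalf]
  · exact (hfin t ht).subset (fun x hx => ⟨hx.1, hx.2.2.1⟩)

lemma Ncard_partition (horb : ∀ x : X, (FOrb F x).Finite)
    (hinv : ∀ x, σ (σ x) = x) (hcomm : ∀ x, F (σ x) = σ (F x))
    (hfin : ∀ s : ℕ, 1 ≤ s → {x : X | σ x ≠ x ∧ (F ^ s) x = σ x}.Finite)
    (s : ℕ) (hs : 1 ≤ s) :
    Nat.card {x : X | σ x ≠ x ∧ (F ^ s) x = σ x}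
      = ∑ t ∈ s.divisors.filter (fun t => Odd (s / t)),
          Nat.card {x : X | σ x ≠ x ∧ IsLeastHalf F σ t x} := by
  classical
  have hB := A_finite (F := F) (σ := σ) hfin
  have key : (hfin s hs).toFinset
      = (s.divisors.filter (fun t => Odd (s / t))).biUnion (fun t => (hB t).toFinset) := by
    ext x
    simp only [Set.Finite.mem_toFinset, Finset.mem_biUnion, Finset.mem_filter,
      Nat.mem_divisors, Set.mem_setOf_eq]
    constructor
    · rintro ⟨hne, hxs⟩
      obtain ⟨t, ht⟩ := exists_least hs hxs
      obtain ⟨hts, hodd⟩ := (pow_eq_sigma_iff horb hinv hcomm hne ht s).mp hxs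
      exact ⟨t, ⟨⟨hts, by omega⟩, hodd⟩, hne, ht⟩
    · rintro ⟨t, ⟨⟨hts, -⟩, hodd⟩, hne, ht⟩
      exact ⟨hne, (pow_eq_sigma_iff horb hinv hcomm hne ht s).mpr ⟨hts, hodd⟩⟩
  have hdisj : ∀ t ∈ s.divisors.filter (fun t => Odd (s / t)),
      ∀ t' ∈ s.divisors.filter (fun t => Odd (s / t)), t ≠ t' →
        Disjoint ((hB t).toFinset) ((hB t').toFinset) := by
    intro t _ t' _ htt'
    rw [Finset.disjoint_left]
    intro x hx hx'
    simp only [Set.Finite.mem_toFinset, Set.mem_setOf_eq] at hx hx'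
    exact htt' (least_unique hx.2 hx'.2)
  rw [Nat.card_coe_set_eq, Set.ncard_eq_toFinset_card _ (hfin s hs), key,
    Finset.card_biUnion hdisj]
  exact Finset.sum_congr rfl fun t _ => by
    rw [Nat.card_coe_set_eq, Set.ncard_eq_toFinset_card _ (hB t)]

end Helpers

lemma sum_moebius_divisors (m : ℕ) :
    ∑ k ∈ m.divisors, (ArithmeticFunction.moebius (m / k) : ℤ)
      = if m = 1 then 1 else 0 := by
  have h := congrArg (fun f : ArithmeticFunction ℤ => f m)
    ArithmeticFunction.moebius_mul_coe_zeta
  simp only [ArithmeticFunction.coe_mul_zeta_apply, ArithmeticFunction.one_apply] at h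
  rw [Nat.sum_div_divisors m (fun d => (ArithmeticFunction.moebius d : ℤ))]
  exact h

lemma moebius_inner (r t : ℕ) (hr : 1 ≤ r) (ht : t ∈ r.divisors) :
    ∑ s ∈ r.divisors.filter (fun s => Odd (r / s) ∧ t ∣ s ∧ Odd (s / t)),
        (ArithmeticFunction.moebius (r / s) : ℤ)
      = if t = r then 1 else 0 := by
  classical
  rw [Nat.mem_divisors] at ht
  obtain ⟨htr, hr0⟩ := ht
  have ht1 : 1 ≤ t := Nat.pos_of_dvd_of_pos htr (by omega)
  set m := r / t with hm
  have hmt : t * m = r := Nat.mul_div_cancel' htr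
  have hm1 : 1 ≤ m := Nat.div_pos (Nat.le_of_dvd (by omega) htr) (by omega)
  have hfact : ∀ s : ℕ, s ∣ r → t ∣ s → (r / s) * (s / t) = m := by
    intro s hsr hts
    have hs1 : 1 ≤ s := Nat.pos_of_dvd_of_pos hsr (by omega)
    rw [Nat.div_mul_div_comm hsr hts, hm, mul_comm r s, Nat.mul_div_mul_left _ _ hs1]
  rcases Nat.even_or_odd m with hme | hmo
  · -- m even: empty sum, and t ≠ r
    have hempty : r.divisors.filter (fun s => Odd (r / s) ∧ t ∣ s ∧ Odd (s / t)) = ∅ := by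
      rw [Finset.filter_eq_empty_iff]
      rintro s hs ⟨ho1, hts, ho2⟩
      rw [Nat.mem_divisors] at hs
      have := hfact s hs.1 hts
      rw [← this] at hme
      exact (Nat.not_even_iff_odd.mpr (ho1.mul ho2)) hme
    have htne : t ≠ r := by
      rintro rfl
      rw [Nat.div_self (by omega)] at hm
      rw [hm] at hme
      simp at hme
    rw [hempty, if_neg htne, Finset.sum_empty]
  · -- m odd
    have hfilter : r.divisors.filter (fun s => Odd (r / s) ∧ t ∣ s ∧ Odd (s / t))
        = r.divisors.filter (fun s => t ∣ s) := by
      apply Finset.filter_congr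
      intro s hs
      rw [Nat.mem_divisors] at hs
      simp only [iff_iff_implies_and_implies]
      constructor
      · rintro ⟨-, hts, -⟩; exact hts
      · intro hts
        have hprod := hfact s hs.1 hts
        have h1 : Odd (r / s) := by
          rcases Nat.even_or_odd (r / s) with he | ho
          · exfalso
            rw [← hprod] at hmo
            exact (Nat.not_odd_iff_even.mpr (he.mul_right _)) hmo
          · exact ho
        have h2 : Odd (s / t) := by
          rcases Nat.even_or_odd (s / t) with he | ho
          · exfalso
            rw [← hprod] at hmo
            exact (Nat.not_odd_iff_even.mpr (he.mul_left _)) hmo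
          · exact ho
        exact ⟨h1, hts, h2⟩
    rw [hfilter]
    have hreindex : ∑ s ∈ r.divisors.filter (fun s => t ∣ s),
        (ArithmeticFunction.moebius (r / s) : ℤ)
        = ∑ k ∈ m.divisors, (ArithmeticFunction.moebius (m / k) : ℤ) := by
      apply Finset.sum_nbij' (fun s => s / t) (fun k => t * k)
      · intro s hsmem
        rw [Finset.mem_filter, Nat.mem_divisors] at hsmem
        obtain ⟨⟨hsr, -⟩, hts⟩ := hsmem
        rw [Nat.mem_divisors]
        exact ⟨⟨r / s, by rw [mul_comm]; exact (hfact s hsr hts).symm⟩, by omega⟩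
      · intro k hk
        rw [Nat.mem_divisors] at hk
        rw [Finset.mem_filter, Nat.mem_divisors]
        exact ⟨⟨(mul_dvd_mul_left t hk.1).trans (by rw [hmt]), by omega⟩, Dvd.intro k rfl⟩
      · intro s hsmem
        rw [Finset.mem_filter] at hsmem
        exact Nat.mul_div_cancel' hsmem.2
      · intro k hk
        exact Nat.mul_div_cancel_left k ht1
      · intro s hsmem
        rw [Finset.mem_filter, Nat.mem_divisors] at hsmem
        obtain ⟨⟨hsr, -⟩, hts⟩ := hsmem
        congr 1
        have hst1 : 0 < s / t :=
          Nat.div_pos (Nat.le_of_dvd (Nat.pos_of_dvd_of_pos hsr (by omega)) hts) (by omega)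
        symm
        apply Nat.div_eq_of_eq_mul_left hst1
        exact (hfact s hsr hts).symm
    rw [hreindex, sum_moebius_divisors]
    have : t = r ↔ m = 1 := by
      constructor
      · rintro rfl; rw [hm, Nat.div_self (by omega)]
      · intro h1; rw [h1, mul_one] at hmt; exact hmt
    simp [this]


theorem stmt9 {X : Type*} (F σ : Equiv.Perm X)
    (hinv : ∀ x, σ (σ x) = x)
    (hcomm : ∀ x, F (σ x) = σ (F x))
    (horb : ∀ x : X, (FOrb F x).Finite)
    (hfin : ∀ s : ℕ, 1 ≤ s → {x : X | σ x ≠ x ∧ (F ^ s) x = σ x}.Finite)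
    (r : ℕ) (hr : 1 ≤ r) :
    (∀ x : X, σ x ≠ x → IsLeastHalf F σ r x →
        Nat.card (FOrb F x) = 2 * r ∧ GOrb F σ x = FOrb F x) ∧
    (Nat.card {x : X | σ x ≠ x ∧ IsLeastHalf F σ r x} : ℤ)
        = ∑ s ∈ r.divisors.filter (fun s => Odd (r / s)),
            (ArithmeticFunction.moebius (r / s) : ℤ) *
              (Nat.card {x : X | σ x ≠ x ∧ (F ^ s) x = σ x} : ℤ) ∧
    (Nat.card {S : Set X | ∃ x : X, σ x ≠ x ∧ IsLeastHalf F σ r x ∧ S = GOrb F σ x} : ℚ)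
        = (1 / (2 * r : ℚ)) *
            ∑ s ∈ r.divisors.filter (fun s => Odd (r / s)),
              (ArithmeticFunction.moebius (r / s) : ℚ) *
                (Nat.card {x : X | σ x ≠ x ∧ (F ^ s) x = σ x} : ℚ) := by
  classical
  have parta : ∀ x : X, σ x ≠ x → IsLeastHalf F σ r x →
      Nat.card (FOrb F x) = 2 * r ∧ GOrb F σ x = FOrb F x := by
    intro x hne h
    exact ⟨(card_FOrb horb x).trans (minimalPeriod_eq horb hinv hcomm hne h),
      GOrb_eq_FOrb' h.2.1⟩
  have partb : (Nat.card {x : X | σ x ≠ x ∧ IsLeastHalf F σ r x} : ℤ)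
      = ∑ s ∈ r.divisors.filter (fun s => Odd (r / s)),
          (ArithmeticFunction.moebius (r / s) : ℤ) *
            (Nat.card {x : X | σ x ≠ x ∧ (F ^ s) x = σ x} : ℤ) := by
    have step1 : ∀ s ∈ r.divisors.filter (fun s => Odd (r / s)),
        (Nat.card {x : X | σ x ≠ x ∧ (F ^ s) x = σ x} : ℤ)
          = ∑ t ∈ s.divisors.filter (fun t => Odd (s / t)),
              (Nat.card {x : X | σ x ≠ x ∧ IsLeastHalf F σ t x} : ℤ) := by
      intro s hs
      rw [Finset.mem_filter, Nat.mem_divisors] at hs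
      have hs1 : 1 ≤ s := Nat.pos_of_dvd_of_pos hs.1.1 (by omega)
      rw [Ncard_partition horb hinv hcomm hfin s hs1]
      push_cast
      rfl
    rw [Finset.sum_congr rfl (fun s hs => by rw [step1 s hs])]
    have step2 : ∑ s ∈ r.divisors.filter (fun s => Odd (r / s)),
        (ArithmeticFunction.moebius (r / s) : ℤ) *
          ∑ t ∈ s.divisors.filter (fun t => Odd (s / t)),
            (Nat.card {x : X | σ x ≠ x ∧ IsLeastHalf F σ t x} : ℤ)
        = ∑ t ∈ r.divisors,
            ∑ s ∈ r.divisors.filter (fun s => Odd (r / s) ∧ t ∣ s ∧ Odd (s / t)),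
              (ArithmeticFunction.moebius (r / s) : ℤ) *
                (Nat.card {x : X | σ x ≠ x ∧ IsLeastHalf F σ t x} : ℤ) := by
      simp_rw [Finset.mul_sum]
      apply Finset.sum_comm'
      intro s t
      simp only [Finset.mem_filter, Nat.mem_divisors]
      constructor
      · rintro ⟨⟨⟨hsr, hr0⟩, ho1⟩, ⟨ts, s0⟩, ho2⟩
        exact ⟨⟨⟨hsr, hr0⟩, ho1, ts, ho2⟩, ts.trans hsr, hr0⟩
      · rintro ⟨⟨⟨hsr, hr0⟩, ho1, ts, ho2⟩, -, -⟩
        refine ⟨⟨⟨hsr, hr0⟩, ho1⟩, ⟨ts, ?_⟩, ho2⟩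
        rintro rfl
        rw [Nat.zero_dvd] at hsr
        exact hr0 hsr
    rw [step2]
    have step3 : ∀ t ∈ r.divisors,
        ∑ s ∈ r.divisors.filter (fun s => Odd (r / s) ∧ t ∣ s ∧ Odd (s / t)),
            (ArithmeticFunction.moebius (r / s) : ℤ) *
              (Nat.card {x : X | σ x ≠ x ∧ IsLeastHalf F σ t x} : ℤ)
          = (if t = r then 1 else 0) *
              (Nat.card {x : X | σ x ≠ x ∧ IsLeastHalf F σ t x} : ℤ) := by
      intro t ht
      rw [← Finset.sum_mul, moebius_inner r t hr ht]
    rw [Finset.sum_congr rfl step3,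
      Finset.sum_eq_single_of_mem r (Nat.mem_divisors_self r (by omega))]
    · simp
    · intro b _ hb
      simp [hb]
  refine ⟨parta, partb, ?_⟩
  -- part (c)
  have hA : ({x : X | σ x ≠ x ∧ IsLeastHalf F σ r x}).Finite := A_finite hfin r
  have hOimg : {S : Set X | ∃ x : X, σ x ≠ x ∧ IsLeastHalf F σ r x ∧ S = GOrb F σ x}
      = (GOrb F σ) '' {x : X | σ x ≠ x ∧ IsLeastHalf F σ r x} := by
    ext S
    constructor
    · rintro ⟨x, h1, h2, rfl⟩; exact ⟨x, ⟨h1, h2⟩, rfl⟩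
    · rintro ⟨x, ⟨h1, h2⟩, rfl⟩; exact ⟨x, h1, h2, rfl⟩
  have hO : ({S : Set X | ∃ x : X, σ x ≠ x ∧ IsLeastHalf F σ r x ∧ S = GOrb F σ x}).Finite := by
    rw [hOimg]; exact hA.image _
  have hmap : ∀ x ∈ hA.toFinset, GOrb F σ x ∈ hO.toFinset := by
    intro x hx
    rw [Set.Finite.mem_toFinset] at hx ⊢
    exact ⟨x, hx.1, hx.2, rfl⟩
  have hcard := Finset.card_eq_sum_card_fiberwise hmap
  have hfiber : ∀ S ∈ hO.toFinset,
      (hA.toFinset.filter (fun x => GOrb F σ x = S)).card = 2 * r := by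
    intro S hS
    rw [Set.Finite.mem_toFinset] at hS
    obtain ⟨x₀, h1, h2, rfl⟩ := hS
    have hfs : hA.toFinset.filter (fun x => GOrb F σ x = GOrb F σ x₀) = (horb x₀).toFinset := by
      ext y
      rw [Finset.mem_filter, Set.Finite.mem_toFinset, Set.Finite.mem_toFinset,
        Set.mem_setOf_eq]
      constructor
      · rintro ⟨⟨hy1, hy2⟩, hy3⟩
        have : y ∈ GOrb F σ y := ⟨0, Or.inl (by simp)⟩
        rw [hy3, GOrb_eq_FOrb' h2.2.1] at this
        exact this
      · intro hy
        obtain ⟨m, rfl⟩ := hy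
        obtain ⟨hne', hlh'⟩ := mem_orbit_least horb hinv hcomm h1 h2 m
        refine ⟨⟨hne', hlh'⟩, ?_⟩
        rw [GOrb_eq_FOrb' hlh'.2.1, GOrb_eq_FOrb' h2.2.1]
        exact FOrb_eq_of_mem horb ⟨m, rfl⟩
    rw [hfs, ← Set.ncard_eq_toFinset_card _ (horb x₀), ← Nat.card_coe_set_eq,
      card_FOrb horb x₀, minimalPeriod_eq horb hinv hcomm h1 h2]
  have htotal : hA.toFinset.card = hO.toFinset.card * (2 * r) := by
    rw [hcard, Finset.sum_congr rfl hfiber, Finset.sum_const, smul_eq_mul]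
  have hQ : ((Nat.card {x : X | σ x ≠ x ∧ IsLeastHalf F σ r x} : ℚ))
      = ∑ s ∈ r.divisors.filter (fun s => Odd (r / s)),
          (ArithmeticFunction.moebius (r / s) : ℚ) *
            (Nat.card {x : X | σ x ≠ x ∧ (F ^ s) x = σ x} : ℚ) := by
    have h := congrArg (fun z : ℤ => (z : ℚ)) partb
    push_cast at h
    exact h
  rw [← hQ, Nat.card_coe_set_eq, Set.ncard_eq_toFinset_card _ hO,
    Nat.card_coe_set_eq, Set.ncard_eq_toFinset_card _ hA, htotal]
  have hr0 : (2 * r : ℚ) ≠ 0 := by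
    have : (0 : ℚ) < 2 * r := by positivity
    exact ne_of_gt this
  push_cast
  field_simp
end

section
/- Let k be a field, s ≥ 1 an integer, a_1,…,a_s and λ_1,…,λ_s nonzero elements of k, and d ∈ k. If Σ_{i=1}^s a_i λ_i^r = d for every integer r ≥ 1, then Σ_{i=1}^s a_i = d. -/
theorem stmt13 {k : Type*} [Field k] (s : ℕ) (hs : 1 ≤ s)
    (a lam : Fin s → k) (d : k)
    (ha : ∀ i, a i ≠ 0) (hlam : ∀ i, lam i ≠ 0)
    (h : ∀ r : ℕ, 1 ≤ r → ∑ i, a i * lam i ^ r = d) :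
    ∑ i, a i = d := by
  classical
  set S : Finset k := insert 1 (Finset.univ.image lam) with hS
  set c : k → k := fun μ =>
    (∑ i ∈ Finset.univ.filter (fun i => lam i = μ), a i) - (if μ = 1 then d else 0) with hc
  have hmaps : ∀ i : Fin s, i ∈ Finset.univ → lam i ∈ S := fun i _ => by
    simp [hS]
  have hfib : ∀ r : ℕ, ∑ μ ∈ S, (∑ i ∈ Finset.univ.filter (fun i => lam i = μ), a i) * μ ^ r
      = ∑ i, a i * lam i ^ r := by
    intro r
    rw [← Finset.sum_fiberwise_of_maps_to hmaps (fun i => a i * lam i ^ r)]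
    refine Finset.sum_congr rfl fun μ _ => ?_
    rw [Finset.sum_mul]
    refine Finset.sum_congr rfl fun i hi => ?_
    rw [(Finset.mem_filter.mp hi).2]
  have hone : ∀ r : ℕ, ∑ μ ∈ S, (if μ = 1 then d else 0) * μ ^ r = d := by
    intro r
    rw [Finset.sum_eq_single 1]
    · simp
    · intro b _ hb; simp [hb]
    · intro habs; exact absurd (Finset.mem_insert_self 1 _) habs
  have key : ∀ r : ℕ, 1 ≤ r → ∑ μ ∈ S, c μ * μ ^ r = 0 := by
    intro r hr
    simp only [hc, sub_mul, Finset.sum_sub_distrib, hfib, hone, h r hr, sub_self]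
  -- linear independence of characters
  have hSne : ∀ μ ∈ S, μ ≠ 0 := by
    intro μ hμ
    rcases Finset.mem_insert.mp hμ with rfl | hμ
    · exact one_ne_zero
    · obtain ⟨i, _, rfl⟩ := Finset.mem_image.mp hμ
      exact hlam i
  have hinj : Function.Injective (powersHom k) := (powersHom k).injective
  have hczero : ∀ μ ∈ S, c μ = 0 := by
    have li := linearIndependent_monoidHom (Multiplicative ℕ) k
    rw [linearIndependent_iff'] at li
    intro μ hμ
    have := li (S.image (powersHom k))
      (fun φ => c (φ (Multiplicative.ofAdd 1)) * φ (Multiplicative.ofAdd 1)) ?_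
      (powersHom k μ) (Finset.mem_image_of_mem _ hμ)
    · simp only [powersHom_apply, toAdd_ofAdd, pow_one] at this
      exact (mul_eq_zero.mp this).resolve_right (hSne μ hμ) 
    · rw [Finset.sum_image (fun x _ y _ hxy => hinj hxy)]
      funext x
      simp only [Finset.sum_apply, Pi.smul_apply, Pi.zero_apply, smul_eq_mul,
        powersHom_apply, toAdd_ofAdd, pow_one]
      have := key (x.toAdd + 1) (Nat.le_add_left 1 _)
      calc ∑ μ ∈ S, c μ * μ * (powersHom k μ) x
          = ∑ μ ∈ S, c μ * μ ^ (x.toAdd + 1) := by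
            refine Finset.sum_congr rfl fun μ _ => ?_
            rw [powersHom_apply, pow_succ]; ring
        _ = 0 := this
  -- conclude
  have := hfib 1
  rw [← Finset.sum_fiberwise_of_maps_to hmaps a]
  calc ∑ μ ∈ S, ∑ i ∈ Finset.univ.filter (fun i => lam i = μ), a i
      = ∑ μ ∈ S, (c μ + if μ = 1 then d else 0) := by
        refine Finset.sum_congr rfl fun μ _ => ?_; simp [hc]
    _ = ∑ μ ∈ S, (if μ = 1 then d else 0) := by
        refine Finset.sum_congr rfl fun μ hμ => ?_; rw [hczero μ hμ, zero_add]
    _ = d := by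
        rw [Finset.sum_eq_single 1]
        · simp
        · intro b _ hb; simp [hb]
        · intro habs; exact absurd (Finset.mem_insert_self 1 _) habs
end

section
/- Let q be an odd prime power, let 𝔽̄_q be an algebraic closure of 𝔽_q, and let r ≥ 1 be an integer. Then the number of elements x ∈ 𝔽̄_q^× with x² ≠ 1, x^{q^r} = x^{−1}, and x^{q^s} ≠ x^{−1} for every integer 1 ≤ s < r, equals Σ_{s | r, r/s odd} μ(r/s)(q^s − 1), where μ is the Möbius function and 'r/s odd' means the integer r/s is odd. -/
/-!
For `x ≠ 0`, `x ^ q ^ t = x⁻¹` means `x ^ (q ^ t + 1) = 1`, i.e. `q ^ t ≡ -1` modulo the order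
of `x`. If `s` is the least such `t` (and `x ^ 2 ≠ 1` forces `s ≥ 1`), then `q` has order `2 s`
modulo `orderOf x`, so `x ^ (q ^ t + 1) = 1` exactly when `s ∣ t` with `t / s` odd. Hence the
`q ^ ρ - 1` roots of `x ^ (q ^ ρ + 1) = 1` other than `±1` are partitioned according to their
least exponent `s`, which runs over the divisors of `ρ` with odd cofactor. Möbius inversion
along odd numbers, after writing `ρ = 2 ^ a m` with `m` odd, inverts this relation.
-/

open Finset Function Polynomial

theorem Nat.modEq_two_mul_iff_dvd_and_odd_div {s t : ℕ} (hs : 0 < s) :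
    t ≡ s [MOD 2 * s] ↔ s ∣ t ∧ Odd (t / s) := by
  constructor
  · intro h
    have hmod : t % (2 * s) = s := by rw [h, Nat.mod_eq_of_lt (by omega)]
    have ht : t = s * (2 * (t / (2 * s)) + 1) := by
      have := Nat.div_add_mod t (2 * s)
      rw [hmod] at this
      linarith
    refine ⟨⟨_, ht⟩, ?_⟩
    rw [ht, Nat.mul_div_cancel_left _ hs]
    exact odd_two_mul_add_one _
  · rintro ⟨⟨k, rfl⟩, hk⟩
    rw [Nat.mul_div_cancel_left _ hs] at hk
    obtain ⟨j, rfl⟩ := hk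
    rw [Nat.ModEq, show s * (2 * j + 1) = s + 2 * s * j by ring, Nat.add_mul_mod_self_left]

section NegOnePow

variable {M : Type*} [Monoid M] [HasDistribNeg M] {Q : M} {s : ℕ}

theorem orderOf_eq_two_mul_of_pow_eq_neg_one (hs0 : 0 < s) (hs : Q ^ s = -1)
    (hmin : ∀ u < s, Q ^ u ≠ -1) : orderOf Q = 2 * s := by
  refine orderOf_eq_iff (by omega) |>.2 ⟨by rw [pow_mul', hs, neg_one_sq], fun m hm hm0 hQm => ?_⟩
  rcases le_or_gt m s with hms | hsm
  · refine hmin (s - m) (by omega) ?_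
    rw [← hs, ← Nat.sub_add_cancel hms, pow_add, hQm, mul_one, Nat.sub_add_cancel hms]
  · refine hmin (m - s) (by omega) ?_
    rw [← Nat.sub_add_cancel hsm.le, pow_add, hs, mul_neg_one, neg_eq_iff_eq_neg] at hQm
    exact hQm

theorem pow_eq_neg_one_iff_of_minimal (hs0 : 0 < s) (hs : Q ^ s = -1)
    (hmin : ∀ u < s, Q ^ u ≠ -1) (t : ℕ) : Q ^ t = -1 ↔ s ∣ t ∧ Odd (t / s) := by
  have hQ := orderOf_eq_two_mul_of_pow_eq_neg_one hs0 hs hmin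
  have hfin : IsOfFinOrder Q := orderOf_pos_iff.1 (by omega)
  rw [← hs, hfin.pow_eq_pow_iff_modEq, hQ, Nat.modEq_two_mul_iff_dvd_and_odd_div hs0]

end NegOnePow

theorem pow_pow_add_one_eq_one_iff_of_minimal {G : Type*} [Monoid G] {x : G} {q s : ℕ}
    (hs0 : 0 < s) (hs : x ^ (q ^ s + 1) = 1) (hmin : ∀ u < s, x ^ (q ^ u + 1) ≠ 1) (t : ℕ) :
    x ^ (q ^ t + 1) = 1 ↔ s ∣ t ∧ Odd (t / s) := by
  have hcast (u : ℕ) : x ^ (q ^ u + 1) = 1 ↔ (q : ZMod (orderOf x)) ^ u = -1 := by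
    rw [← orderOf_dvd_iff_pow_eq_one, ← ZMod.natCast_eq_zero_iff, Nat.cast_add, Nat.cast_pow,
      Nat.cast_one, add_eq_zero_iff_eq_neg]
  rw [hcast]
  exact pow_eq_neg_one_iff_of_minimal hs0 ((hcast s).1 hs)
    (fun u hu => (hcast u).not.1 (hmin u hu)) t

def oddQuotientDivisors (n : ℕ) : Finset ℕ := n.divisors.filter fun d => Odd (n / d)

@[simp]
theorem mem_oddQuotientDivisors {n d : ℕ} : d ∈ oddQuotientDivisors n ↔ d ∣ n ∧ Odd (n / d) := by
  rw [oddQuotientDivisors, mem_filter, Nat.mem_divisors, and_assoc]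
  refine and_congr_right fun _ => ⟨fun h => h.2, fun h => ⟨?_, h⟩⟩
  rintro rfl
  simp at h

theorem oddQuotientDivisors_two_pow_mul {a m : ℕ} (hm : Odd m) :
    oddQuotientDivisors (2 ^ a * m) = m.divisors.image (2 ^ a * ·) := by
  ext d
  simp only [mem_oddQuotientDivisors, mem_image, Nat.mem_divisors]
  constructor
  · rintro ⟨hd, hodd⟩
    have hcop : Nat.Coprime (2 ^ a) (2 ^ a * m / d) :=
      Nat.Coprime.pow_left _ (Nat.coprime_two_left.2 hodd)
    obtain ⟨i, rfl⟩ : 2 ^ a ∣ d :=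
      hcop.dvd_of_dvd_mul_right (by rw [Nat.mul_div_cancel' hd]; exact dvd_mul_right _ _)
    exact ⟨i, ⟨Nat.dvd_of_mul_dvd_mul_left (by positivity) hd, hm.pos.ne'⟩, rfl⟩
  · rintro ⟨i, ⟨hi, -⟩, rfl⟩
    rw [Nat.mul_div_mul_left _ _ (by positivity)]
    exact ⟨mul_dvd_mul_left _ hi, hm.of_dvd_nat (Nat.div_dvd_of_dvd hi)⟩

theorem sum_oddQuotientDivisors_two_pow_mul {M : Type*} [AddCommMonoid M] (f : ℕ → M)
    {a m : ℕ} (hm : Odd m) :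
    ∑ d ∈ oddQuotientDivisors (2 ^ a * m), f d = ∑ i ∈ m.divisors, f (2 ^ a * i) := by
  rw [oddQuotientDivisors_two_pow_mul hm,
    sum_image fun i _ j _ h => Nat.eq_of_mul_eq_mul_left (by positivity) h]

open ArithmeticFunction in
theorem sum_oddQuotientDivisors_moebius_mul_eq {R : Type*} [Ring R] {f g : ℕ → R}
    (h : ∀ n > 0, ∑ d ∈ oddQuotientDivisors n, f d = g n) {n : ℕ} (hn : 0 < n) :
    ∑ d ∈ oddQuotientDivisors n, (moebius (n / d) : R) * g d = f n := by
  obtain ⟨a, m, hm, rfl⟩ := Nat.exists_eq_two_pow_mul_odd hn.ne'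
  have hinv := (sum_eq_iff_sum_mul_moebius_eq_on (f := fun i => f (2 ^ a * i))
    (g := fun i => g (2 ^ a * i)) {n | Odd n} fun _ _ hd hn => Odd.of_dvd_nat hn hd).1
    (fun k hk hodd => by rw [← h _ (by positivity), sum_oddQuotientDivisors_two_pow_mul _ hodd])
    m hm.pos hm
  rw [sum_oddQuotientDivisors_two_pow_mul _ hm, ← hinv,
    Nat.sum_divisorsAntidiagonal' fun i j => (moebius i : R) * g (2 ^ a * j)]
  refine sum_congr rfl fun i _ => ?_
  rw [Nat.mul_div_mul_left _ _ (by positivity)]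

section NormOneRoots

variable (F : Type*) [CommRing F] [IsDomain F]

-- `x ^ (q ^ r + 1)` is the norm of `x` from `𝔽_{q^{2r}}` to `𝔽_{q^r}`.
open Classical in
noncomputable def exactNormOneRoots (q r : ℕ) : Finset F :=
  (nthRootsFinset (q ^ r + 1) (1 : F)).filter fun x => ∀ u < r, x ^ (q ^ u + 1) ≠ 1

variable {F}

theorem mem_exactNormOneRoots {q r : ℕ} {x : F} :
    x ∈ exactNormOneRoots F q r ↔ x ^ (q ^ r + 1) = 1 ∧ ∀ u < r, x ^ (q ^ u + 1) ≠ 1 := by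
  simp only [exactNormOneRoots, mem_filter, mem_nthRootsFinset (Nat.succ_pos _)]

theorem pairwise_disjoint_exactNormOneRoots (q : ℕ) :
    Pairwise (Disjoint on (exactNormOneRoots F q)) := by
  have h (s t : ℕ) (hst : s < t) : Disjoint (exactNormOneRoots F q s) (exactNormOneRoots F q t) :=
    disjoint_left.2 fun x hs ht =>
      (mem_exactNormOneRoots.1 ht).2 s hst (mem_exactNormOneRoots.1 hs).1
  intro s t hst
  rcases lt_or_gt_of_ne hst with hlt | hgt
  exacts [h s t hlt, (h t s hgt).symm]

theorem filter_sq_ne_one_nthRootsFinset_eq_biUnion [DecidableEq F] (q ρ : ℕ) :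
    (nthRootsFinset (q ^ ρ + 1) (1 : F)).filter (fun x => x ^ 2 ≠ 1) =
      (oddQuotientDivisors ρ).biUnion (exactNormOneRoots F q) := by
  ext x
  simp only [mem_filter, mem_biUnion, mem_nthRootsFinset (Nat.succ_pos _),
    mem_oddQuotientDivisors, mem_exactNormOneRoots]
  constructor
  · rintro ⟨hx, hx2⟩
    have hex : ∃ t, x ^ (q ^ t + 1) = 1 := ⟨ρ, hx⟩
    have hmin : ∀ u < Nat.find hex, x ^ (q ^ u + 1) ≠ 1 := fun u => Nat.find_min hex
    have hs0 : 0 < Nat.find hex := Nat.pos_of_ne_zero fun h0 => hx2 (by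
      simpa [h0] using Nat.find_spec hex)
    exact ⟨Nat.find hex,
      (pow_pow_add_one_eq_one_iff_of_minimal hs0 (Nat.find_spec hex) hmin ρ).1 hx,
      Nat.find_spec hex, hmin⟩
  · rintro ⟨s, hsρ, hs, hmin⟩
    have hs0 : 0 < s := Nat.pos_of_ne_zero fun h0 => by simp [h0] at hsρ
    exact ⟨(pow_pow_add_one_eq_one_iff_of_minimal hs0 hs hmin ρ).2 hsρ,
      by simpa using hmin 0 hs0⟩

end NormOneRoots

theorem card_filter_sq_ne_one_nthRootsFinset {F : Type*} [Field F] [IsAlgClosed F]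
    [DecidableEq F] {q ρ : ℕ} (hq : Odd q) (hqF : (q : F) = 0) (hρ : ρ ≠ 0) :
    #((nthRootsFinset (q ^ ρ + 1) (1 : F)).filter (fun x => x ^ 2 ≠ 1)) = q ^ ρ - 1 := by
  have htwo : (2 : F) ≠ 0 := by
    obtain ⟨k, rfl⟩ := hq
    intro h
    simp [h] at hqF
  have : NeZero ((q ^ ρ + 1 : ℕ) : F) := ⟨by simp [hqF, hρ]⟩
  obtain ⟨ζ, hζ⟩ := HasEnoughRootsOfUnity.exists_primitiveRoot F (q ^ ρ + 1)
  have hsq : (nthRootsFinset (q ^ ρ + 1) (1 : F)).filter (fun x => x ^ 2 ≠ 1) =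
      nthRootsFinset (q ^ ρ + 1) (1 : F) \ {1, -1} := by
    ext x
    simp [sq_eq_one_iff]
  have hsub : ({1, -1} : Finset F) ⊆ nthRootsFinset (q ^ ρ + 1) (1 : F) := by
    simp [insert_subset_iff, mem_nthRootsFinset, (hq.pow.add_one).neg_one_pow]
  have hpair : #({1, -1} : Finset F) = 2 :=
    card_pair fun h => htwo (by linear_combination h)
  rw [hsq, card_sdiff_of_subset hsub, hζ.card_nthRootsFinset, hpair]
  omega

theorem sum_card_exactNormOneRoots {F : Type*} [Field F] [IsAlgClosed F] {q ρ : ℕ}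
    (hq : Odd q) (hqF : (q : F) = 0) (hρ : ρ ≠ 0) :
    ∑ s ∈ oddQuotientDivisors ρ, #(exactNormOneRoots F q s) = q ^ ρ - 1 := by
  classical
  rw [← card_biUnion ((pairwise_disjoint_exactNormOneRoots q).set_pairwise _),
    ← filter_sq_ne_one_nthRootsFinset_eq_biUnion, card_filter_sq_ne_one_nthRootsFinset hq hqF hρ]

theorem pow_eq_inv_iff_pow_succ_eq_one {G₀ : Type*} [GroupWithZero G₀] {x : G₀} (hx : x ≠ 0)
    (n : ℕ) : x ^ n = x⁻¹ ↔ x ^ (n + 1) = 1 := by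
  rw [pow_succ, mul_eq_one_iff_eq_inv₀ hx]

theorem mem_exactNormOneRoots_iff_pow_eq_inv {F : Type*} [Field F] {q r : ℕ} (hr : r ≠ 0)
    {x : F} : x ∈ exactNormOneRoots F q r ↔ x ≠ 0 ∧ x ^ 2 ≠ 1 ∧ x ^ (q ^ r) = x⁻¹ ∧
      ∀ s : ℕ, 1 ≤ s → s < r → x ^ (q ^ s) ≠ x⁻¹ := by
  rw [mem_exactNormOneRoots]
  constructor
  · rintro ⟨hxr, hmin⟩
    have hx0 : x ≠ 0 := by
      rintro rfl
      simp at hxr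
    exact ⟨hx0, by simpa using hmin 0 (Nat.pos_of_ne_zero hr),
      (pow_eq_inv_iff_pow_succ_eq_one hx0 _).2 hxr,
      fun s _ hsr h => hmin s hsr ((pow_eq_inv_iff_pow_succ_eq_one hx0 _).1 h)⟩
  · rintro ⟨hx0, hx2, hxr, hmin⟩
    refine ⟨(pow_eq_inv_iff_pow_succ_eq_one hx0 _).1 hxr, fun u hur hu => ?_⟩
    rcases Nat.eq_zero_or_pos u with rfl | hu0
    · exact hx2 (by simpa using hu)
    · exact hmin u hu0 hur ((pow_eq_inv_iff_pow_succ_eq_one hx0 _).2 hu)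

/-- Let `K` be a finite field with `q` elements, `q` odd, and `K̄` its algebraic closure.
For `r ≥ 1`, the number of `x ∈ K̄ˣ` with `x² ≠ 1`, `x^{q^r} = x⁻¹` and `x^{q^s} ≠ x⁻¹`
for all `1 ≤ s < r` equals `Σ_{s ∣ r, r/s odd} μ(r/s) (q^s - 1)`. -/
theorem stmt16 (K : Type) [Field K] [Fintype K] (hodd : Odd (Fintype.card K))
    (r : ℕ) (hr : 1 ≤ r) :
    (Nat.card {x : AlgebraicClosure K // x ≠ 0 ∧ x ^ 2 ≠ 1 ∧
        x ^ (Fintype.card K ^ r) = x⁻¹ ∧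
        ∀ s : ℕ, 1 ≤ s → s < r → x ^ (Fintype.card K ^ s) ≠ x⁻¹} : ℤ)
      = ∑ s ∈ r.divisors.filter (fun s => Odd (r / s)),
          (ArithmeticFunction.moebius (r / s) : ℤ) * ((Fintype.card K : ℤ) ^ s - 1) := by
  set q := Fintype.card K
  have hqF : (q : AlgebraicClosure K) = 0 := by
    rw [← map_natCast (algebraMap K _), FiniteField.cast_card_eq_zero, map_zero]
  have hcard : Nat.card {x : AlgebraicClosure K // x ≠ 0 ∧ x ^ 2 ≠ 1 ∧ x ^ (q ^ r) = x⁻¹ ∧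
      ∀ s : ℕ, 1 ≤ s → s < r → x ^ (q ^ s) ≠ x⁻¹} =
        #(exactNormOneRoots (AlgebraicClosure K) q r) := by
    rw [← Nat.card_eq_finsetCard]
    exact Nat.card_congr (Equiv.subtypeEquivRight fun x =>
      (mem_exactNormOneRoots_iff_pow_eq_inv (by omega)).symm)
  have hsum (n : ℕ) (hn : 0 < n) :
      ∑ s ∈ oddQuotientDivisors n, (#(exactNormOneRoots (AlgebraicClosure K) q s) : ℤ) =
        (q : ℤ) ^ n - 1 := by
    rw [← Nat.cast_sum, sum_card_exactNormOneRoots hodd hqF hn.ne',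
      Nat.cast_sub (Nat.one_le_pow _ _ hodd.pos), Nat.cast_pow, Nat.cast_one]
  rw [hcard, ← sum_oddQuotientDivisors_moebius_mul_eq hsum hr]
  simp only [Int.cast_id, oddQuotientDivisors]
end
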